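/- Let A, B ⊂ ℤⁿ be non-empty finite sets. Then |A + B + {0,1}ⁿ|^{1/n} ≥ |A|^{1/n} + |B|^{1/n}, where {0,1}ⁿ is the set of vertices of the unit lattice cube. -/

import Mathlib

/-!
Replace every `a ∈ A` by the unit cube `(a, a + 1]`: `A` becomes a union `S` of `|A|` disjoint
cubes, `B` a union `T` of `|B|` cubes, and `S + T` is covered by the cubes at the points of
`A + B + {0,1}ⁿ`. So it suffices to prove the Brunn–Minkowski inequality
`|S + T|^{1/n} ≥ |S|^{1/n} + |T|^{1/n}` for finite unions of disjoint boxes, which goes by the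
Hadwiger–Ohmann induction on the number of boxes. For two boxes it is AM–GM on the side lengths.
Otherwise two disjoint boxes of `S` are separated by a hyperplane `x i = t`, which cuts `S` into
two unions of fewer boxes; by the intermediate value theorem a parallel hyperplane cuts `T` in the
same volume ratio, and the inequalities for the two pairs of halves add up.
-/

open Set MeasureTheory BoxIntegral Bornology Filter Topology
open scoped Pointwise ENNReal Finset

variable {ι : Type*}

theorem Set.Ioc_add_Ioc {a b c d : ℝ} (hab : a < b) (hcd : c < d) :
    Ioc a b + Ioc c d = Ioc (a + c) (b + d) := by
  ext x
  constructor
  · rintro ⟨p, ⟨hpa, hpb⟩, q, ⟨hqc, hqd⟩, rfl⟩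
    exact ⟨by linarith, by linarith⟩
  · rintro ⟨hxl, hxu⟩
    set m := min b (x - c)
    have hm : a < m := lt_min hab (by linarith)
    refine ⟨max (x - d) ((a + m) / 2), ⟨?_, ?_⟩, x - max (x - d) ((a + m) / 2), ⟨?_, ?_⟩, by ring⟩
    · exact lt_max_of_lt_right (by linarith)
    · exact max_le (by linarith) (by linarith [min_le_left b (x - c)])
    · have : max (x - d) ((a + m) / 2) < x - c :=
        max_lt (by linarith) (by linarith [min_le_right b (x - c)])
      linarith
    · linarith [le_max_left (x - d) ((a + m) / 2)]

theorem Set.univ_pi_add_univ_pi {α : ι → Type*} [∀ i, Add (α i)] (s t : ∀ i, Set (α i)) :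
    univ.pi s + univ.pi t = univ.pi fun i => s i + t i := by
  ext x
  constructor
  · rintro ⟨p, hp, q, hq, rfl⟩ i -
    exact ⟨p i, hp i trivial, q i, hq i trivial, rfl⟩
  · intro hx
    choose p hp q hq hpq using fun i => hx i trivial
    exact ⟨p, fun i _ => hp i, q, fun i _ => hq i, funext hpq⟩

theorem Real.prod_rpow_inv_add_prod_rpow_inv_le [Fintype ι] [Nonempty ι] {a b : ι → ℝ}
    (ha : ∀ i, 0 < a i) (hb : ∀ i, 0 < b i) :
    (∏ i, a i) ^ (Fintype.card ι : ℝ)⁻¹ + (∏ i, b i) ^ (Fintype.card ι : ℝ)⁻¹ ≤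
      (∏ i, (a i + b i)) ^ (Fintype.card ι : ℝ)⁻¹ := by
  set w : ℝ := (Fintype.card ι : ℝ)⁻¹
  have hc : ∀ i, 0 < a i + b i := fun i => add_pos (ha i) (hb i)
  have hw : ∑ _i : ι, w = 1 := by simp [w]
  have hw0 : 0 ≤ w := by positivity
  have hprod : 0 < (∏ i, (a i + b i)) ^ w :=
    Real.rpow_pos_of_pos (Finset.prod_pos fun i _ => hc i) w
  -- AM-GM for the ratios `f i / (a i + b i)`
  have amgm : ∀ f : ι → ℝ, (∀ i, 0 ≤ f i) →
      (∏ i, f i) ^ w / (∏ i, (a i + b i)) ^ w ≤ ∑ i, w * (f i / (a i + b i)) := by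
    intro f hf
    rw [← Real.div_rpow (Finset.prod_nonneg fun i _ => hf i)
      (Finset.prod_nonneg fun i _ => (hc i).le), ← Finset.prod_div_distrib,
      ← Real.finsetProd_rpow _ _ fun i _ => div_nonneg (hf i) (hc i).le]
    exact Real.geom_mean_le_arith_mean_weighted _ _ _ (fun i _ => hw0) hw
      fun i _ => div_nonneg (hf i) (hc i).le
  have hsum : ∑ i, w * (a i / (a i + b i)) + ∑ i, w * (b i / (a i + b i)) = 1 := by
    rw [← Finset.sum_add_distrib, ← hw]
    exact Finset.sum_congr rfl fun i _ => by rw [← mul_add, ← add_div, div_self (hc i).ne', mul_one]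
  have := add_le_add (amgm a fun i => (ha i).le) (amgm b fun i => (hb i).le)
  rwa [hsum, ← add_div, div_le_one hprod] at this

theorem Real.add_rpow_inv_pow_mul {d : ℕ} (hd : d ≠ 0) {θ a b : ℝ} (hθ : 0 ≤ θ) (ha : 0 ≤ a)
    (hb : 0 ≤ b) :
    ((θ * a) ^ (d⁻¹ : ℝ) + (θ * b) ^ (d⁻¹ : ℝ)) ^ d = θ * (a ^ (d⁻¹ : ℝ) + b ^ (d⁻¹ : ℝ)) ^ d := by
  rw [Real.mul_rpow hθ ha, Real.mul_rpow hθ hb, ← mul_add, mul_pow,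
    Real.rpow_inv_natCast_pow hθ hd]

theorem measurableSet_coord_le (i : ι) (t : ℝ) : MeasurableSet {x : ι → ℝ | x i ≤ t} :=
  measurableSet_le (measurable_pi_apply i) measurable_const

section Measure

variable [Fintype ι]

theorem measureReal_inter_coord_lt {T : Set (ι → ℝ)} (hT : volume T ≠ ∞) (i : ι) (t : ℝ) :
    volume.real (T ∩ {x | t < x i}) = volume.real T - volume.real (T ∩ {x | x i ≤ t}) := by
  rw [← measureReal_inter_add_sdiff (measurableSet_coord_le i t) hT, add_sub_cancel_left]
  congr 1
  ext x
  simp [not_le]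

theorem continuous_measureReal_inter_coord_le {T : Set (ι → ℝ)} (hT : MeasurableSet T)
    (hTf : volume T ≠ ∞) (i : ι) : Continuous fun s => volume.real (T ∩ {x | x i ≤ s}) := by
  have hint : (fun s => volume.real (T ∩ {x | x i ≤ s})) =
      fun s => ∫ x, (T ∩ {x | x i ≤ s}).indicator 1 x := by
    funext s
    rw [integral_indicator_one (hT.inter (measurableSet_coord_le i s))]
  rw [hint, continuous_iff_continuousAt]
  intro s₀
  refine continuousAt_of_dominated (bound := T.indicator 1)
    (Eventually.of_forall fun s => (aestronglyMeasurable_const.indicator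
      (hT.inter (measurableSet_coord_le i s))))
    (Eventually.of_forall fun s => ae_of_all _ fun x =>
      (norm_indicator_le_of_subset inter_subset_left _ x).trans_eq
        (Real.norm_of_nonneg (indicator_nonneg (fun _ _ => zero_le_one) x)))
    ((integrable_indicator_iff hT).2 (integrableOn_const hTf)) ?_
  -- off the null hyperplane `x i = s₀`, the integrand is locally constant in `s`
  filter_upwards [Measure.ae_eval_ne (fun _ => volume) i s₀] with x hx
  have hloc : ∀ᶠ s in 𝓝 s₀, (x i ≤ s ↔ x i ≤ s₀) := by
    rcases hx.lt_or_gt with h | h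
    · filter_upwards [eventually_gt_nhds h] with s hs
      simp [hs.le, h.le]
    · filter_upwards [eventually_lt_nhds h] with s hs
      simp [not_le.2 hs, not_le.2 h]
  refine (continuousAt_const (y := (T ∩ {x | x i ≤ s₀}).indicator 1 x)).congr
    (hloc.mono fun s hs => ?_)
  have hmem : x ∈ T ∩ {x | x i ≤ s} ↔ x ∈ T ∩ {x | x i ≤ s₀} := and_congr_right' hs
  beta_reduce
  by_cases h : x ∈ T ∩ {x | x i ≤ s₀}
  · rw [indicator_of_mem h, indicator_of_mem (hmem.2 h)]
  · rw [indicator_of_notMem h, indicator_of_notMem (mt hmem.1 h)]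

theorem exists_measureReal_inter_coord_le_eq {T : Set (ι → ℝ)} (hT : MeasurableSet T)
    (hTb : IsBounded T) (i : ι) {c : ℝ} (hc : c ∈ Icc 0 (volume.real T)) :
    ∃ s, volume.real (T ∩ {x | x i ≤ s}) = c := by
  obtain ⟨R, hR⟩ := hTb.subset_closedBall 0
  have hxR : ∀ x ∈ T, |x i| ≤ R := fun x hx =>
    (norm_le_pi_norm x i).trans (mem_closedBall_zero_iff.1 (hR hx))
  have hlow : T ∩ {x | x i ≤ -R - 1} = ∅ :=
    eq_empty_of_forall_notMem fun x ⟨hxT, (hxi : x i ≤ -R - 1)⟩ => by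
      linarith [neg_abs_le (x i), hxR x hxT]
  have hhigh : T ∩ {x | x i ≤ R} = T :=
    inter_eq_left.2 fun x hx => (le_abs_self (x i)).trans (hxR x hx)
  have := intermediate_value_univ (-R - 1) R
    (continuous_measureReal_inter_coord_le hT hTb.measure_lt_top.ne i)
  rw [hlow, hhigh, measureReal_empty] at this
  exact this hc

end Measure

section BrunnMinkowski

variable [Fintype ι]

def IsBrunnMinkowskiPair (S T : Set (ι → ℝ)) : Prop :=
  (volume.real S ^ (Fintype.card ι : ℝ)⁻¹ + volume.real T ^ (Fintype.card ι : ℝ)⁻¹) ^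
    Fintype.card ι ≤ volume.real (S + T)

theorem IsBrunnMinkowskiPair.symm {S T : Set (ι → ℝ)} (h : IsBrunnMinkowskiPair S T) :
    IsBrunnMinkowskiPair T S := by
  rwa [IsBrunnMinkowskiPair, add_comm, add_comm T]

/-- The lower and the upper halves of `S + T` lie on opposite sides of `x i = t + s`, so their
volumes add up, and by homogeneity the bounds for the halves add up to the bound for `S, T`. -/
theorem IsBrunnMinkowskiPair.of_cut [Nonempty ι] {S T : Set (ι → ℝ)} {i : ι} {t s θ : ℝ}
    (hθ₀ : 0 ≤ θ) (hθ₁ : θ ≤ 1) (hS : volume S ≠ ∞) (hT : volume T ≠ ∞)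
    (hST : volume (S + T) ≠ ∞)
    (hSθ : volume.real (S ∩ {x | x i ≤ t}) = θ * volume.real S)
    (hTθ : volume.real (T ∩ {x | x i ≤ s}) = θ * volume.real T)
    (hlow : IsBrunnMinkowskiPair (S ∩ {x | x i ≤ t}) (T ∩ {x | x i ≤ s}))
    (hhigh : IsBrunnMinkowskiPair (S ∩ {x | t < x i}) (T ∩ {x | s < x i})) :
    IsBrunnMinkowskiPair S T := by
  have hd : Fintype.card ι ≠ 0 := Fintype.card_ne_zero
  have hSθ' : volume.real (S ∩ {x | t < x i}) = (1 - θ) * volume.real S := by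
    rw [measureReal_inter_coord_lt hS, hSθ]; ring
  have hTθ' : volume.real (T ∩ {x | s < x i}) = (1 - θ) * volume.real T := by
    rw [measureReal_inter_coord_lt hT, hTθ]; ring
  rw [IsBrunnMinkowskiPair, hSθ, hTθ, Real.add_rpow_inv_pow_mul hd hθ₀ measureReal_nonneg
    measureReal_nonneg] at hlow
  rw [IsBrunnMinkowskiPair, hSθ', hTθ', Real.add_rpow_inv_pow_mul hd (by linarith)
    measureReal_nonneg measureReal_nonneg] at hhigh
  set H := {x : ι → ℝ | x i ≤ t + s}
  have hlow_sub : (S ∩ {x | x i ≤ t}) + (T ∩ {x | x i ≤ s}) ⊆ (S + T) ∩ H := by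
    rintro _ ⟨p, ⟨hpS, hpi : p i ≤ t⟩, q, ⟨hqT, hqi : q i ≤ s⟩, rfl⟩
    exact ⟨add_mem_add hpS hqT, show p i + q i ≤ t + s by linarith⟩
  have hhigh_sub : (S ∩ {x | t < x i}) + (T ∩ {x | s < x i}) ⊆ (S + T) \ H := by
    rintro _ ⟨p, ⟨hpS, hpi : t < p i⟩, q, ⟨hqT, hqi : s < q i⟩, rfl⟩
    exact ⟨add_mem_add hpS hqT, fun h : p i + q i ≤ t + s => by linarith⟩
  set M := (volume.real S ^ (Fintype.card ι : ℝ)⁻¹ + volume.real T ^ (Fintype.card ι : ℝ)⁻¹) ^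
    Fintype.card ι
  calc M = θ * M + (1 - θ) * M := by ring
  _ ≤ volume.real ((S + T) ∩ H) + volume.real ((S + T) \ H) :=
      add_le_add (hlow.trans (measureReal_mono hlow_sub (measure_ne_top_of_subset
        inter_subset_left hST))) (hhigh.trans (measureReal_mono hhigh_sub
        (measure_ne_top_of_subset sdiff_subset hST)))
  _ = volume.real (S + T) := measureReal_inter_add_sdiff (measurableSet_coord_le i _) hST

end BrunnMinkowski

namespace BoxIntegral.Box

theorem coe_add_coe (J K : Box ι) : (J : Set (ι → ℝ)) + K =
    univ.pi fun i => Ioc (J.lower i + K.lower i) (J.upper i + K.upper i) := by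
  rw [coe_eq_pi, coe_eq_pi, univ_pi_add_univ_pi]
  exact congrArg _ (funext fun i => Ioc_add_Ioc (J.lower_lt_upper i) (K.lower_lt_upper i))

theorem exists_upper_le_lower_of_disjoint {J K : Box ι} (h : Disjoint (J : Set (ι → ℝ)) K) :
    ∃ i, J.upper i ≤ K.lower i ∨ K.upper i ≤ J.lower i := by
  by_contra! hJK
  set x : ι → ℝ := fun i => min (J.upper i) (K.upper i)
  have hxJ : x ∈ J := fun i => ⟨lt_min (J.lower_lt_upper i) (hJK i).2, min_le_left _ _⟩
  have hxK : x ∈ K := fun i => ⟨lt_min (hJK i).1 (K.lower_lt_upper i), min_le_right _ _⟩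
  exact disjoint_left.1 h hxJ hxK

variable [Fintype ι]

theorem measureReal_coe (J : Box ι) :
    volume.real (J : Set (ι → ℝ)) = ∏ i, (J.upper i - J.lower i) :=
  volume_apply' J

theorem measureReal_coe_pos (J : Box ι) : 0 < volume.real (J : Set (ι → ℝ)) := by
  rw [measureReal_coe]
  exact Finset.prod_pos fun i _ => sub_pos.2 (J.lower_lt_upper i)

theorem isBrunnMinkowskiPair [Nonempty ι] (J K : Box ι) :
    IsBrunnMinkowskiPair (J : Set (ι → ℝ)) K := by
  have hsum : volume.real ((J : Set (ι → ℝ)) + (K : Set (ι → ℝ))) =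
      ∏ i, ((J.upper i - J.lower i) + (K.upper i - K.lower i)) := by
    rw [coe_add_coe, measureReal_def, Real.volume_pi_Ioc_toReal fun i =>
      add_le_add (J.lower_le_upper i) (K.lower_le_upper i)]
    exact Finset.prod_congr rfl fun i _ => by ring
  have hJ i : 0 < J.upper i - J.lower i := sub_pos.2 (J.lower_lt_upper i)
  have hK i : 0 < K.upper i - K.lower i := sub_pos.2 (K.lower_lt_upper i)
  rw [IsBrunnMinkowskiPair, hsum]
  refine (pow_le_pow_left₀ (add_nonneg (Real.rpow_nonneg measureReal_nonneg _)
    (Real.rpow_nonneg measureReal_nonneg _)) ?_ _).trans (Real.rpow_inv_natCast_pow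
    (Finset.prod_nonneg fun i _ => (add_pos (hJ i) (hK i)).le) Fintype.card_ne_zero).le
  rw [measureReal_coe, measureReal_coe]
  exact Real.prod_rpow_inv_add_prod_rpow_inv_le hJ hK

end BoxIntegral.Box

def boxUnion (F : Finset (Box ι)) : Set (ι → ℝ) := ⋃ J ∈ F, (J : Set (ι → ℝ))

open Classical in
noncomputable def restrictBoxes (F : Finset (Box ι)) (f : Box ι → WithBot (Box ι)) :
    Finset (Box ι) :=
  (F.image f).eraseNone

section restrictBoxes

variable {F : Finset (Box ι)} {f : Box ι → WithBot (Box ι)}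

open Classical in
theorem mem_restrictBoxes {K : Box ι} : K ∈ restrictBoxes F f ↔ ∃ J ∈ F, f J = K :=
  Finset.mem_eraseNone.trans Finset.mem_image

theorem boxUnion_restrictBoxes : boxUnion (restrictBoxes F f) = ⋃ J ∈ F, (f J : Set (ι → ℝ)) := by
  ext x
  simp only [boxUnion, mem_iUnion₂, mem_restrictBoxes, exists_prop]
  constructor
  · rintro ⟨K, ⟨J, hJ, hJK⟩, hx⟩
    exact ⟨J, hJ, by rwa [hJK]⟩
  · rintro ⟨J, hJ, hx⟩
    cases hfJ : f J with
    | bot => simp [hfJ, Box.coe_bot] at hx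
    | coe K => exact ⟨K, ⟨J, hJ, hfJ⟩, by rwa [hfJ] at hx⟩

theorem pairwiseDisjoint_restrictBoxes
    (hf : ∀ J : Box ι, (f J : Set (ι → ℝ)) ⊆ (J : Set (ι → ℝ)))
    (hF : (F : Set (Box ι)).PairwiseDisjoint Box.toSet) :
    (restrictBoxes F f : Set (Box ι)).PairwiseDisjoint Box.toSet := by
  intro K₁ hK₁ K₂ hK₂ hne
  obtain ⟨J₁, hJ₁, h₁⟩ := mem_restrictBoxes.1 hK₁
  obtain ⟨J₂, hJ₂, h₂⟩ := mem_restrictBoxes.1 hK₂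
  have hJ : J₁ ≠ J₂ := by rintro rfl; exact hne (WithBot.coe_injective (h₁.symm.trans h₂))
  refine (hF hJ₁ hJ₂ hJ).mono ?_ ?_
  · simpa [h₁] using hf J₁
  · simpa [h₂] using hf J₂

open Classical in
theorem card_restrictBoxes_le : #(restrictBoxes F f) ≤ #F :=
  (Finset.card_eraseNone_le _).trans Finset.card_image_le

theorem card_restrictBoxes_lt {J : Box ι} (hJ : J ∈ F) (hfJ : f J = ⊥) :
    #(restrictBoxes F f) < #F := by
  classical
  have hbot : (⊥ : WithBot (Box ι)) ∈ F.image f := hfJ ▸ Finset.mem_image_of_mem f hJ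
  exact (Finset.card_eraseNone_eq_card_erase _).trans_lt <|
    (Finset.card_erase_lt_of_mem hbot).trans_le Finset.card_image_le

end restrictBoxes

section boxUnion

variable {F G : Finset (Box ι)}

theorem boxUnion_restrictBoxes_splitLower (F : Finset (Box ι)) (i : ι) (t : ℝ) :
    boxUnion (restrictBoxes F fun J => J.splitLower i t) = boxUnion F ∩ {x | x i ≤ t} := by
  rw [boxUnion_restrictBoxes, boxUnion, iUnion₂_inter]
  simp only [Box.coe_splitLower]

theorem boxUnion_restrictBoxes_splitUpper (F : Finset (Box ι)) (i : ι) (t : ℝ) :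
    boxUnion (restrictBoxes F fun J => J.splitUpper i t) = boxUnion F ∩ {x | t < x i} := by
  rw [boxUnion_restrictBoxes, boxUnion, iUnion₂_inter]
  simp only [Box.coe_splitUpper]

theorem pairwiseDisjoint_restrictBoxes_splitLower
    (hF : (F : Set (Box ι)).PairwiseDisjoint Box.toSet) (i : ι) (t : ℝ) :
    ((restrictBoxes F fun J => J.splitLower i t) : Set (Box ι)).PairwiseDisjoint Box.toSet :=
  pairwiseDisjoint_restrictBoxes (fun J => by rw [Box.coe_splitLower]; exact inter_subset_left) hF

theorem pairwiseDisjoint_restrictBoxes_splitUpper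
    (hF : (F : Set (Box ι)).PairwiseDisjoint Box.toSet) (i : ι) (t : ℝ) :
    ((restrictBoxes F fun J => J.splitUpper i t) : Set (Box ι)).PairwiseDisjoint Box.toSet :=
  pairwiseDisjoint_restrictBoxes (fun J => by rw [Box.coe_splitUpper]; exact inter_subset_left) hF

theorem coe_subset_boxUnion {J : Box ι} (hJ : J ∈ F) : (J : Set (ι → ℝ)) ⊆ boxUnion F :=
  fun _ hx => mem_iUnion₂.2 ⟨J, hJ, hx⟩

theorem isBounded_boxUnion [Finite ι] (F : Finset (Box ι)) : IsBounded (boxUnion F) :=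
  (isBounded_biUnion_finset F).2 fun J _ => J.isBounded

variable [Fintype ι]

theorem measurableSet_boxUnion (F : Finset (Box ι)) : MeasurableSet (boxUnion F) :=
  F.measurableSet_biUnion fun J _ => J.measurableSet_coe

theorem nonempty_of_measureReal_boxUnion_pos (h : 0 < volume.real (boxUnion F)) : F.Nonempty := by
  rw [Finset.nonempty_iff_ne_empty]
  rintro rfl
  simp [boxUnion] at h

theorem Finset.Nonempty.measureReal_boxUnion_pos (hF : F.Nonempty) :
    0 < volume.real (boxUnion F) := by
  obtain ⟨J, hJ⟩ := hF
  exact J.measureReal_coe_pos.trans_le (measureReal_mono (coe_subset_boxUnion hJ)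
    (isBounded_boxUnion F).measure_lt_top.ne)

theorem exists_cut_boxUnion (hG : G.Nonempty) (i : ι) {θ : ℝ} (hθ₀ : 0 < θ) (hθ₁ : θ < 1) :
    ∃ s, volume.real (boxUnion G ∩ {x | x i ≤ s}) = θ * volume.real (boxUnion G) ∧
      (restrictBoxes G fun J => J.splitLower i s).Nonempty ∧
      (restrictBoxes G fun J => J.splitUpper i s).Nonempty := by
  have hT := hG.measureReal_boxUnion_pos
  obtain ⟨s, hs⟩ := exists_measureReal_inter_coord_le_eq (measurableSet_boxUnion G)
    (isBounded_boxUnion G) i ⟨by positivity, mul_le_of_le_one_left hT.le hθ₁.le⟩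
  refine ⟨s, hs, nonempty_of_measureReal_boxUnion_pos ?_, nonempty_of_measureReal_boxUnion_pos ?_⟩
  · rw [boxUnion_restrictBoxes_splitLower, hs]
    positivity
  · rw [boxUnion_restrictBoxes_splitUpper,
      measureReal_inter_coord_lt (isBounded_boxUnion G).measure_lt_top.ne, hs]
    nlinarith

theorem measureReal_boxUnion_inter_coord_le_div_mem_Ioo {F : Finset (Box ι)} {J K : Box ι}
    (hJ : J ∈ F) (hK : K ∈ F) {i : ι} (hJK : J.upper i ≤ K.lower i) :
    volume.real (boxUnion F ∩ {x | x i ≤ J.upper i}) / volume.real (boxUnion F) ∈ Ioo 0 1 := by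
  have hS : volume (boxUnion F) ≠ ∞ := (isBounded_boxUnion F).measure_lt_top.ne
  have hlow : 0 < volume.real (boxUnion F ∩ {x | x i ≤ J.upper i}) :=
    J.measureReal_coe_pos.trans_le <| measureReal_mono
      (subset_inter (coe_subset_boxUnion hJ) fun x hx => (hx i).2)
      (measure_ne_top_of_subset inter_subset_left hS)
  have hhigh : 0 < volume.real (boxUnion F ∩ {x | J.upper i < x i}) :=
    K.measureReal_coe_pos.trans_le <| measureReal_mono
      (subset_inter (coe_subset_boxUnion hK) fun x hx => hJK.trans_lt (hx i).1)
      (measure_ne_top_of_subset inter_subset_left hS)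
  rw [measureReal_inter_coord_lt hS] at hhigh
  exact ⟨div_pos hlow (by linarith), (div_lt_one (by linarith)).2 (by linarith)⟩

end boxUnion

section HadwigerOhmann

variable [Fintype ι] [Nonempty ι]

theorem isBrunnMinkowskiPair_boxUnion_of_upper_le_lower {F G : Finset (Box ι)}
    (ih : ∀ F' G' : Finset (Box ι), #F' + #G' < #F + #G → F'.Nonempty → G'.Nonempty →
      (F' : Set (Box ι)).PairwiseDisjoint Box.toSet →
      (G' : Set (Box ι)).PairwiseDisjoint Box.toSet →
      IsBrunnMinkowskiPair (boxUnion F') (boxUnion G'))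
    (hG : G.Nonempty) (hFd : (F : Set (Box ι)).PairwiseDisjoint Box.toSet)
    (hGd : (G : Set (Box ι)).PairwiseDisjoint Box.toSet)
    {J K : Box ι} (hJ : J ∈ F) (hK : K ∈ F) {i : ι} (hJK : J.upper i ≤ K.lower i) :
    IsBrunnMinkowskiPair (boxUnion F) (boxUnion G) := by
  set t := J.upper i
  have hS : volume (boxUnion F) ≠ ∞ := (isBounded_boxUnion F).measure_lt_top.ne
  have hT : volume (boxUnion G) ≠ ∞ := (isBounded_boxUnion G).measure_lt_top.ne
  obtain ⟨hθ₀, hθ₁⟩ := measureReal_boxUnion_inter_coord_le_div_mem_Ioo hJ hK hJK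
  set θ := volume.real (boxUnion F ∩ {x | x i ≤ t}) / volume.real (boxUnion F)
  have hSθ : volume.real (boxUnion F ∩ {x | x i ≤ t}) = θ * volume.real (boxUnion F) :=
    (div_mul_cancel₀ _ (Finset.Nonempty.measureReal_boxUnion_pos ⟨J, hJ⟩).ne').symm
  obtain ⟨s, hTθ, hG₁, hG₂⟩ := exists_cut_boxUnion hG i hθ₀ hθ₁
  have hcard₁ := card_restrictBoxes_lt (f := fun L => L.splitLower i t) hK
    (K.splitLower_eq_bot.2 hJK)
  have hcard₂ := card_restrictBoxes_lt (f := fun L => L.splitUpper i t) hJ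
    (J.splitUpper_eq_bot.2 le_rfl)
  have hcardG₁ := card_restrictBoxes_le (F := G) (f := fun L => L.splitLower i s)
  have hcardG₂ := card_restrictBoxes_le (F := G) (f := fun L => L.splitUpper i s)
  refine .of_cut hθ₀.le hθ₁.le hS hT ((isBounded_boxUnion F).add
    (isBounded_boxUnion G)).measure_lt_top.ne hSθ hTθ ?_ ?_
  · rw [← boxUnion_restrictBoxes_splitLower, ← boxUnion_restrictBoxes_splitLower]
    exact ih _ _ (by omega) ⟨J, mem_restrictBoxes.2 ⟨J, hJ, J.splitLower_eq_self.2 le_rfl⟩⟩ hG₁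
      (pairwiseDisjoint_restrictBoxes_splitLower hFd i t)
      (pairwiseDisjoint_restrictBoxes_splitLower hGd i s)
  · rw [← boxUnion_restrictBoxes_splitUpper, ← boxUnion_restrictBoxes_splitUpper]
    exact ih _ _ (by omega) ⟨K, mem_restrictBoxes.2 ⟨K, hK, K.splitUpper_eq_self.2 hJK⟩⟩ hG₂
      (pairwiseDisjoint_restrictBoxes_splitUpper hFd i t)
      (pairwiseDisjoint_restrictBoxes_splitUpper hGd i s)

theorem isBrunnMinkowskiPair_boxUnion_of_one_lt_card {F G : Finset (Box ι)}
    (ih : ∀ F' G' : Finset (Box ι), #F' + #G' < #F + #G → F'.Nonempty → G'.Nonempty →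
      (F' : Set (Box ι)).PairwiseDisjoint Box.toSet →
      (G' : Set (Box ι)).PairwiseDisjoint Box.toSet →
      IsBrunnMinkowskiPair (boxUnion F') (boxUnion G'))
    (hG : G.Nonempty) (hFd : (F : Set (Box ι)).PairwiseDisjoint Box.toSet)
    (hGd : (G : Set (Box ι)).PairwiseDisjoint Box.toSet) (hF : 1 < #F) :
    IsBrunnMinkowskiPair (boxUnion F) (boxUnion G) := by
  obtain ⟨J, hJ, K, hK, hJK⟩ := Finset.one_lt_card.1 hF
  obtain ⟨i, hi | hi⟩ := Box.exists_upper_le_lower_of_disjoint (hFd hJ hK hJK)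
  · exact isBrunnMinkowskiPair_boxUnion_of_upper_le_lower ih hG hFd hGd hJ hK hi
  · exact isBrunnMinkowskiPair_boxUnion_of_upper_le_lower ih hG hFd hGd hK hJ hi

theorem isBrunnMinkowskiPair_boxUnion {F G : Finset (Box ι)} (hF : F.Nonempty)
    (hG : G.Nonempty) (hFd : (F : Set (Box ι)).PairwiseDisjoint Box.toSet)
    (hGd : (G : Set (Box ι)).PairwiseDisjoint Box.toSet) :
    IsBrunnMinkowskiPair (boxUnion F) (boxUnion G) := by
  induction hN : #F + #G using Nat.strong_induction_on generalizing F G with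
  | _ N ih =>
  subst hN
  by_cases hF₁ : 1 < #F
  · exact isBrunnMinkowskiPair_boxUnion_of_one_lt_card
      (fun _ _ h hF' hG' hFd' hGd' => ih _ h hF' hG' hFd' hGd' rfl) hG hFd hGd hF₁
  by_cases hG₁ : 1 < #G
  · exact (isBrunnMinkowskiPair_boxUnion_of_one_lt_card
      (fun _ _ h hG' hF' hGd' hFd' => (ih _ (by omega) hF' hG' hFd' hGd' rfl).symm)
      hF hGd hFd hG₁).symm
  obtain ⟨J, rfl⟩ := Finset.card_eq_one.1 (show #F = 1 by have := hF.card_pos; omega)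
  obtain ⟨K, rfl⟩ := Finset.card_eq_one.1 (show #G = 1 by have := hG.card_pos; omega)
  simpa [boxUnion] using J.isBrunnMinkowskiPair K

end HadwigerOhmann

section Lattice

open Classical

def latticeCube (a : ι → ℤ) : Box ι where
  lower i := a i
  upper i := a i + 1
  lower_lt_upper _ := lt_add_one _

variable (ι) in
def cubeVertices [Fintype ι] [DecidableEq ι] : Finset (ι → ℤ) :=
  Fintype.piFinset fun _ => {0, 1}

theorem disjoint_latticeCube {a b : ι → ℤ} (h : a ≠ b) :
    Disjoint (latticeCube a : Set (ι → ℝ)) (latticeCube b) := by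
  refine disjoint_left.2 fun x hxa hxb => h (funext fun i => ?_)
  obtain ⟨h₁, h₂⟩ : (a i : ℝ) < x i ∧ x i ≤ a i + 1 := hxa i
  obtain ⟨h₃, h₄⟩ : (b i : ℝ) < x i ∧ x i ≤ b i + 1 := hxb i
  have hab : a i < b i + 1 := by exact_mod_cast h₁.trans_le h₄
  have hba : b i < a i + 1 := by exact_mod_cast h₃.trans_le h₂
  omega

theorem pairwiseDisjoint_image_latticeCube (A : Finset (ι → ℤ)) :
    ((A.image latticeCube : Finset (Box ι)) : Set (Box ι)).PairwiseDisjoint Box.toSet := by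
  rintro _ hJ _ hK hJK
  obtain ⟨a, -, rfl⟩ := Finset.mem_image.1 hJ
  obtain ⟨b, -, rfl⟩ := Finset.mem_image.1 hK
  exact disjoint_latticeCube fun hab => hJK (hab ▸ rfl)

theorem boxUnion_image_latticeCube (A : Finset (ι → ℤ)) :
    boxUnion (A.image latticeCube) = ⋃ a ∈ A, (latticeCube a : Set (ι → ℝ)) :=
  Finset.set_biUnion_finset_image

variable [Fintype ι]

theorem measureReal_boxUnion_image_latticeCube (A : Finset (ι → ℤ)) :
    volume.real (boxUnion (A.image latticeCube)) = #A := by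
  rw [boxUnion_image_latticeCube, measureReal_biUnion_finset
    (fun a _ b _ hab => disjoint_latticeCube hab) (fun a _ => Box.measurableSet_coe _)
    fun a _ => (Box.measure_coe_lt_top _ _).ne]
  simp [Box.measureReal_coe, latticeCube]

variable [DecidableEq ι]

theorem coe_latticeCube_add_subset (a b : ι → ℤ) :
    (latticeCube a : Set (ι → ℝ)) + latticeCube b ⊆
      ⋃ e ∈ cubeVertices ι, (latticeCube (a + b + e) : Set (ι → ℝ)) := by
  rw [Box.coe_add_coe]
  intro x hx
  -- `e i` picks which of the two unit cells of `(a i + b i, a i + b i + 2]` contains `x i`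
  set e : ι → ℤ := fun i => if x i ≤ a i + b i + 1 then 0 else 1
  refine mem_iUnion₂.2 ⟨e, Fintype.mem_piFinset.2 fun i => ?_, fun i => ?_⟩
  · by_cases h : x i ≤ a i + b i + 1 <;> simp [e, h]
  · obtain ⟨h₁, h₂⟩ : (a i + b i : ℝ) < x i ∧ x i ≤ a i + 1 + (b i + 1) := hx i trivial
    by_cases h : x i ≤ a i + b i + 1
    · simp only [latticeCube, e, h, if_true, Pi.add_apply, Int.cast_add, Int.cast_zero]
      constructor <;> linarith
    · simp only [latticeCube, e, h, if_false, Pi.add_apply, Int.cast_add, Int.cast_one]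
      constructor <;> linarith

theorem boxUnion_image_latticeCube_add_subset (A B : Finset (ι → ℤ)) :
    boxUnion (A.image latticeCube) + boxUnion (B.image latticeCube) ⊆
      boxUnion ((A + B + cubeVertices ι).image latticeCube) := by
  rintro _ ⟨p, hp, q, hq, rfl⟩
  rw [boxUnion_image_latticeCube, mem_iUnion₂] at hp hq ⊢
  obtain ⟨a, ha, hpa⟩ := hp
  obtain ⟨b, hb, hqb⟩ := hq
  obtain ⟨e, he, hx⟩ := mem_iUnion₂.1 (coe_latticeCube_add_subset a b (add_mem_add hpa hqb))
  exact ⟨a + b + e, Finset.add_mem_add (Finset.add_mem_add ha hb) he, hx⟩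

theorem rpow_card_add_rpow_card_le_rpow_card_add_add_cubeVertices [Nonempty ι]
    {A B : Finset (ι → ℤ)} (hA : A.Nonempty) (hB : B.Nonempty) :
    (#A : ℝ) ^ (Fintype.card ι : ℝ)⁻¹ + (#B : ℝ) ^ (Fintype.card ι : ℝ)⁻¹ ≤
      (#(A + B + cubeVertices ι) : ℝ) ^ (Fintype.card ι : ℝ)⁻¹ := by
  have h := isBrunnMinkowskiPair_boxUnion (hA.image latticeCube) (hB.image latticeCube)
    (pairwiseDisjoint_image_latticeCube A) (pairwiseDisjoint_image_latticeCube B)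
  rw [IsBrunnMinkowskiPair, measureReal_boxUnion_image_latticeCube,
    measureReal_boxUnion_image_latticeCube] at h
  rw [← measureReal_boxUnion_image_latticeCube (A + B + cubeVertices ι)]
  have hinv : (0 : ℝ) ≤ (Fintype.card ι : ℝ)⁻¹ := by positivity
  calc (#A : ℝ) ^ (Fintype.card ι : ℝ)⁻¹ + (#B : ℝ) ^ (Fintype.card ι : ℝ)⁻¹
      = (((#A : ℝ) ^ (Fintype.card ι : ℝ)⁻¹ + (#B : ℝ) ^ (Fintype.card ι : ℝ)⁻¹) ^
          Fintype.card ι) ^ (Fintype.card ι : ℝ)⁻¹ :=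
        (Real.pow_rpow_inv_natCast (by positivity) Fintype.card_ne_zero).symm
    _ ≤ volume.real (boxUnion (A.image latticeCube) + boxUnion (B.image latticeCube)) ^
          (Fintype.card ι : ℝ)⁻¹ := Real.rpow_le_rpow (by positivity) h hinv
    _ ≤ _ := Real.rpow_le_rpow measureReal_nonneg (measureReal_mono
          (boxUnion_image_latticeCube_add_subset A B)
          (isBounded_boxUnion _).measure_lt_top.ne) hinv

end Lattice

theorem stmt18 (n : ℕ) (hn : 0 < n) (A B : Set (Fin n → ℤ))
    (hA : A.Nonempty) (hB : B.Nonempty) (hAf : A.Finite) (hBf : B.Finite) :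
    ((A + B + {v : Fin n → ℤ | ∀ i, v i = 0 ∨ v i = 1}).ncard : ℝ) ^ ((1 : ℝ) / n) ≥
      (A.ncard : ℝ) ^ ((1 : ℝ) / n) + (B.ncard : ℝ) ^ ((1 : ℝ) / n) := by
  have : Nonempty (Fin n) := ⟨⟨0, hn⟩⟩
  lift A to Finset (Fin n → ℤ) using hAf
  lift B to Finset (Fin n → ℤ) using hBf
  have hvert : {v : Fin n → ℤ | ∀ i, v i = 0 ∨ v i = 1} = (cubeVertices (Fin n) : Set _) := by
    ext v
    simp [cubeVertices]
  rw [hvert, ← Finset.coe_add, ← Finset.coe_add, ncard_coe_finset, ncard_coe_finset,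
    ncard_coe_finset, one_div]
  simpa using rpow_card_add_rpow_card_le_rpow_card_add_add_cubeVertices
    (Finset.coe_nonempty.1 hA) (Finset.coe_nonempty.1 hB)
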